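/- arXiv:1810.07346 — 8 statements merged into one kernel-verified Lean document; each statement's English description precedes it below -/
import Mathlib

section
/- If p ∈ conv(S), then for every p' ∈ conv(S) there exists v ∈ S with ‖p' - v‖ ≥ ‖p - v‖ (i.e., a p-pivot exists at every iterate). -/
open scoped RealInnerProductSpace


theorem pivot_exists_of_mem_hull (m : ℕ) (p : EuclideanSpace ℝ (Fin m))
    (S : Finset (EuclideanSpace ℝ (Fin m)))
    (hp : p ∈ convexHull ℝ (S : Set (EuclideanSpace ℝ (Fin m)))) :
    ∀ p' ∈ convexHull ℝ (S : Set (EuclideanSpace ℝ (Fin m))),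
      ∃ v ∈ S, ‖p' - v‖ ≥ ‖p - v‖ := by
  intro p' hp'
  by_contra h
  push_neg at h
  set C : Set (EuclideanSpace ℝ (Fin m)) :=
    {x | ⟪p - p', x⟫ < (‖p‖ ^ 2 - ‖p'‖ ^ 2) / 2} with hC
  have hconv : Convex ℝ C :=
    convex_halfSpace_lt ⟨fun x y => inner_add_right _ _ _,
      fun c x => real_inner_smul_right _ _ _⟩ _
  have hSC : (S : Set (EuclideanSpace ℝ (Fin m))) ⊆ C := by
    intro v hv
    have h1 : ‖p' - v‖ < ‖p - v‖ := h v hv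
    have h2 : ‖p' - v‖ ^ 2 < ‖p - v‖ ^ 2 := by
      have := norm_nonneg (p' - v)
      nlinarith
    have e1 : ‖p - v‖ ^ 2 = ‖p‖ ^ 2 - 2 * ⟪p, v⟫ + ‖v‖ ^ 2 := norm_sub_sq_real p v
    have e2 : ‖p' - v‖ ^ 2 = ‖p'‖ ^ 2 - 2 * ⟪p', v⟫ + ‖v‖ ^ 2 := norm_sub_sq_real p' v
    have e3 : ⟪p - p', v⟫ = ⟪p, v⟫ - ⟪p', v⟫ := inner_sub_left _ _ _
    simp only [hC, Set.mem_setOf_eq]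
    linarith
  have hpC : p ∈ C := convexHull_min hSC hconv hp
  simp only [hC, Set.mem_setOf_eq] at hpC
  have e3 : ⟪p - p', p⟫ = ⟪p, p⟫ - ⟪p', p⟫ := inner_sub_left _ _ _
  have e4 : ‖p' - p‖ ^ 2 = ‖p'‖ ^ 2 - 2 * ⟪p', p⟫ + ‖p‖ ^ 2 := norm_sub_sq_real p' p
  have e5 : ⟪p, p⟫ = ‖p‖ ^ 2 := real_inner_self_eq_norm_sq p
  have := sq_nonneg ‖p' - p‖
  nlinarith
end

section
/- Suppose p ∈ conv(S) and p ∉ S. Then for every p' ∈ conv(S) with p' ≠ p there exists v ∈ S such that (p' - p)ᵀ(v - p) ≤ 0, i.e., the angle ∠ p' p v is at least π/2 (a strict pivot exists). -/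
open RealInnerProductSpace

theorem strict_pivot_exists (m : ℕ) (p : EuclideanSpace ℝ (Fin m))
    (S : Finset (EuclideanSpace ℝ (Fin m)))
    (hp : p ∈ convexHull ℝ (S : Set (EuclideanSpace ℝ (Fin m)))) (hpS : p ∉ S) :
    ∀ p' ∈ convexHull ℝ (S : Set (EuclideanSpace ℝ (Fin m))), p' ≠ p →
      ∃ v ∈ S, ⟪p' - p, v - p⟫ ≤ 0 := by
  intro p' hp' hne
  by_contra h
  push_neg at h
  set w := p' - p with hw
  have hconv : Convex ℝ {x : EuclideanSpace ℝ (Fin m) | ⟪w, p⟫ < ⟪w, x⟫} :=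
    convex_halfSpace_gt ⟨fun a b => inner_add_right w a b,
      fun c x => real_inner_smul_right w x c⟩ _
  have hsub : (S : Set (EuclideanSpace ℝ (Fin m))) ⊆
      {x | ⟪w, p⟫ < ⟪w, x⟫} := by
    intro v hv
    have h1 := h v hv
    rw [inner_sub_right] at h1
    show ⟪w, p⟫ < ⟪w, v⟫
    linarith
  have hmem : p ∈ {x : EuclideanSpace ℝ (Fin m) | ⟪w, p⟫ < ⟪w, x⟫} :=
    convexHull_min hsub hconv hp
  have : ⟪w, p⟫ < ⟪w, p⟫ := hmem
  exact lt_irrefl _ this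
end

section
/- Let p ∈ ℝ^m, S = {v_1,…,v_n} ⊂ ℝ^m with p ∉ S, and set S_0 = {(v_i - p)/‖v_i - p‖ : i = 1,…,n}. Then p ∈ conv(S) if and only if 0 ∈ conv(S_0). -/
theorem spherical_chm_equivalence (m : ℕ) (p : EuclideanSpace ℝ (Fin m))
    (S : Finset (EuclideanSpace ℝ (Fin m))) (hpS : p ∉ S) :
    p ∈ convexHull ℝ (S : Set (EuclideanSpace ℝ (Fin m))) ↔
      (0 : EuclideanSpace ℝ (Fin m)) ∈
        convexHull ℝ ((fun v => ‖v - p‖⁻¹ • (v - p)) '' (S : Set (EuclideanSpace ℝ (Fin m)))) := by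
  constructor
  · intro hp
    rw [convexHull_eq] at hp
    obtain ⟨ι, t, w, z, hw0, hw1, hzS, hcm⟩ := hp
    have hz_ne : ∀ i ∈ t, z i - p ≠ 0 := by
      intro i hi h
      apply hpS
      have : z i = p := by rwa [sub_eq_zero] at h
      rw [← this]; exact hzS i hi
    set c : ι → ℝ := fun i => w i * ‖z i - p‖ with hc
    have hc0 : ∀ i ∈ t, 0 ≤ c i := fun i hi =>
      mul_nonneg (hw0 i hi) (norm_nonneg _)
    have hcpos : 0 < ∑ i ∈ t, c i := by
      apply Finset.sum_pos' hc0
      have : ∃ i ∈ t, 0 < w i := by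
        by_contra h
        push_neg at h
        have : ∑ i ∈ t, w i ≤ 0 :=
          Finset.sum_nonpos fun i hi => h i hi
        linarith
      obtain ⟨i, hi, hwi⟩ := this
      exact ⟨i, hi, mul_pos hwi (norm_pos_iff.mpr (hz_ne i hi))⟩
    have key : ∑ i ∈ t, c i • (‖z i - p‖⁻¹ • (z i - p)) = 0 := by
      have : ∀ i ∈ t, c i • (‖z i - p‖⁻¹ • (z i - p)) = w i • (z i - p) := by
        intro i hi
        rw [smul_smul, hc]
        congr 1
        rw [mul_assoc, mul_inv_cancel₀ (norm_ne_zero_iff.mpr (hz_ne i hi)), mul_one]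
      rw [Finset.sum_congr rfl this]
      have : ∑ i ∈ t, w i • (z i - p) = (∑ i ∈ t, w i • z i) - (∑ i ∈ t, w i) • p := by
        simp [smul_sub, Finset.sum_sub_distrib, Finset.sum_smul]
      rw [this, hw1, one_smul, sub_eq_zero]
      rw [Finset.centerMass, hw1, inv_one, one_smul] at hcm
      exact hcm
    have := Finset.centerMass_mem_convexHull t hc0 hcpos
      (z := fun i => ‖z i - p‖⁻¹ • (z i - p))
      (s := (fun v => ‖v - p‖⁻¹ • (v - p)) '' (S : Set (EuclideanSpace ℝ (Fin m))))
      (fun i hi => ⟨z i, hzS i hi, rfl⟩)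
    rwa [Finset.centerMass, key, smul_zero] at this
  · intro h0
    rw [convexHull_eq] at h0
    obtain ⟨ι, t, w, z, hw0, hw1, hzS, hcm⟩ := h0
    have hch : ∀ i : ι, ∃ x : EuclideanSpace ℝ (Fin m),
        i ∈ t → x ∈ S ∧ ‖x - p‖⁻¹ • (x - p) = z i := by
      intro i
      by_cases hi : i ∈ t
      · obtain ⟨x, hxS, hxz⟩ := hzS i hi
        exact ⟨x, fun _ => ⟨hxS, hxz⟩⟩
      · exact ⟨0, fun h => absurd h hi⟩
    choose v hv using hch
    have hvS : ∀ i ∈ t, v i ∈ S := fun i hi => (hv i hi).1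
    have hvz : ∀ i ∈ t, ‖v i - p‖⁻¹ • (v i - p) = z i := fun i hi => (hv i hi).2
    have hv_ne : ∀ i ∈ t, v i - p ≠ 0 := by
      intro i hi h
      apply hpS
      have : v i = p := by rwa [sub_eq_zero] at h
      rw [← this]; exact hvS i hi
    set c : ι → ℝ := fun i => w i * ‖v i - p‖⁻¹ with hc
    have hc0 : ∀ i ∈ t, 0 ≤ c i := fun i hi =>
      mul_nonneg (hw0 i hi) (inv_nonneg.mpr (norm_nonneg _))
    have hcpos : 0 < ∑ i ∈ t, c i := by
      apply Finset.sum_pos' hc0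
      have : ∃ i ∈ t, 0 < w i := by
        by_contra h
        push_neg at h
        have : ∑ i ∈ t, w i ≤ 0 := Finset.sum_nonpos fun i hi => h i hi
        linarith
      obtain ⟨i, hi, hwi⟩ := this
      exact ⟨i, hi, mul_pos hwi (inv_pos.mpr (norm_pos_iff.mpr (hv_ne i hi)))⟩
    have key : ∑ i ∈ t, c i • v i = (∑ i ∈ t, c i) • p := by
      have h1 : ∑ i ∈ t, c i • (v i - p) = 0 := by
        have heq : ∀ i ∈ t, c i • (v i - p) = w i • z i := by
          intro i hi
          rw [← hvz i hi, smul_smul, hc]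
        rw [Finset.sum_congr rfl heq]
        rw [Finset.centerMass, hw1, inv_one, one_smul] at hcm
        exact hcm
      have h2 : ∑ i ∈ t, c i • (v i - p)
          = (∑ i ∈ t, c i • v i) - (∑ i ∈ t, c i) • p := by
        simp [smul_sub, Finset.sum_sub_distrib, Finset.sum_smul]
      rw [h2, sub_eq_zero] at h1
      exact h1
    have hmem := Finset.centerMass_mem_convexHull t hc0 hcpos
      (z := v) (s := (S : Set (EuclideanSpace ℝ (Fin m)))) hvS
    rwa [Finset.centerMass, key, smul_smul,
      inv_mul_cancel₀ (ne_of_gt hcpos), one_smul] at hmem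
end

section
/- Let p ∈ ℝ^m, S = {v_1,…,v_n} ⊂ ℝ^m with p ∉ S, R = max_i ‖v_i - p‖, and u_i = (v_i - p)/‖v_i - p‖. Let ε ∈ (0,1) and suppose α_1,…,α_n ≥ 0 with Σα_i = 1 satisfy ‖Σ_i α_i u_i‖ ≤ ε. Define β_i = (α_i/‖v_i - p‖) / (Σ_j α_j/‖v_j - p‖). Then the β_i are nonnegative, sum to 1, and ‖p - Σ_i β_i v_i‖ ≤ ε R. -/
theorem approx_solution_conversion (m n : ℕ) (p : EuclideanSpace ℝ (Fin m))
    (v : Fin n → EuclideanSpace ℝ (Fin m)) (hvp : ∀ i, v i ≠ p)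
    (R : ℝ) (hR1 : ∀ i, ‖v i - p‖ ≤ R) (hR2 : ∃ i, ‖v i - p‖ = R)
    (ε : ℝ) (hε : ε ∈ Set.Ioo (0 : ℝ) 1)
    (α : Fin n → ℝ) (hα : ∀ i, 0 ≤ α i) (hαsum : ∑ i, α i = 1)
    (happrox : ‖∑ i, α i • (‖v i - p‖⁻¹ • (v i - p))‖ ≤ ε) :
    let β : Fin n → ℝ := fun i => (α i / ‖v i - p‖) / (∑ j, α j / ‖v j - p‖)
    (∀ i, 0 ≤ β i) ∧ (∑ i, β i = 1) ∧ ‖p - ∑ i, β i • v i‖ ≤ ε * R := by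
  intro β
  have hnorm : ∀ i, 0 < ‖v i - p‖ := fun i =>
    norm_pos_iff.mpr (sub_ne_zero.mpr (hvp i))
  obtain ⟨i0, hi0⟩ := hR2
  have hRpos : 0 < R := hi0 ▸ hnorm i0
  set c : ℝ := ∑ j, α j / ‖v j - p‖ with hc
  have hcge : 1 / R ≤ c := by
    calc 1 / R = ∑ j, α j / R := by rw [← Finset.sum_div, hαsum]
    _ ≤ c := by
      apply Finset.sum_le_sum
      intro j _
      apply div_le_div_of_nonneg_left (hα j) (hnorm j) (hR1 j)
  have hcpos : 0 < c := lt_of_lt_of_le (by positivity) hcge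
  have hβ : ∀ i, 0 ≤ β i := fun i => by
    have := hα i; have := (hnorm i).le; positivity
  refine ⟨hβ, ?_, ?_⟩
  · show (∑ i, (α i / ‖v i - p‖) / c) = 1
    rw [← Finset.sum_div, ← hc, div_self hcpos.ne']
  · have hsum1 : ∑ i, β i = 1 := by
      show (∑ i, (α i / ‖v i - p‖) / c) = 1
      rw [← Finset.sum_div, ← hc, div_self hcpos.ne']
    have key : p - ∑ i, β i • v i = -(c⁻¹ • ∑ i, α i • (‖v i - p‖⁻¹ • (v i - p))) := by
      rw [Finset.smul_sum]
      have : (∑ i, β i • v i) - p = ∑ i, β i • (v i - p) := by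
        simp only [smul_sub, Finset.sum_sub_distrib, ← Finset.sum_smul, hsum1, one_smul]
      rw [← neg_sub (∑ i, β i • v i) p, this]
      congr 1
      apply Finset.sum_congr rfl
      intro i _
      rw [smul_smul, smul_smul]
      congr 1
      show (α i / ‖v i - p‖) / c = c⁻¹ * α i * ‖v i - p‖⁻¹
      field_simp
    rw [key, norm_neg, norm_smul, norm_inv, Real.norm_of_nonneg hcpos.le]
    have h1 : c⁻¹ ≤ R := by
      rw [inv_le_comm₀ hcpos hRpos, ← one_div]
      exact hcge
    calc c⁻¹ * ‖∑ i, α i • (‖v i - p‖⁻¹ • (v i - p))‖ ≤ c⁻¹ * ε :=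
        mul_le_mul_of_nonneg_left happrox (inv_nonneg.mpr hcpos.le)
      _ ≤ R * ε := mul_le_mul_of_nonneg_right h1 hε.1.le
      _ = ε * R := mul_comm _ _
end

section
/- Let p' ∈ ℝ^m and let v ∈ ℝ^m be a unit vector with p'ᵀv ≤ 0 and ‖p' - v‖ ≥ √(1+ε) for some ε ∈ (0,1). Let p'' be the orthogonal projection of 0 onto the line through p' and v. Then ‖p' - p''‖ ≥ √(1+ε) - 1 ≥ (√2 - 1)ε. -/
open RealInnerProductSpace

theorem epsilon_property_progress (m : ℕ) (ε : ℝ) (hε : ε ∈ Set.Ioo (0 : ℝ) 1)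
    (p' v : EuclideanSpace ℝ (Fin m)) (hv : ‖v‖ = 1) (hpivot : ⟪p', v⟫ ≤ 0)
    (hfar : ‖p' - v‖ ≥ Real.sqrt (1 + ε)) :
    let t : ℝ := ⟪-p', v - p'⟫ / ‖v - p'‖ ^ 2
    let p'' := p' + t • (v - p')
    ‖p' - p''‖ ≥ Real.sqrt (1 + ε) - 1 ∧
      Real.sqrt (1 + ε) - 1 ≥ (Real.sqrt 2 - 1) * ε := by
  obtain ⟨hε0, hε1⟩ := hε
  intro t p''
  set s := Real.sqrt (1 + ε) with hs
  have hs2 : s ^ 2 = 1 + ε := Real.sq_sqrt (by linarith)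
  have hs1 : (1 : ℝ) ≤ s := by
    nlinarith [Real.sqrt_nonneg (1 + ε)]
  have hr2 : Real.sqrt 2 ^ 2 = 2 := Real.sq_sqrt (by norm_num)
  have hsle : s ≤ Real.sqrt 2 := Real.sqrt_le_sqrt (by linarith)
  set d := ‖v - p'‖ with hdd
  have hd : d = ‖p' - v‖ := norm_sub_rev _ _
  have hdge : d ≥ s := by rw [hd]; exact hfar
  have hdpos : (0:ℝ) < d := lt_of_lt_of_le (by linarith) hdge
  -- inner product computations
  have hnum : ⟪-p', v - p'⟫ = ‖p'‖ ^ 2 - ⟪p', v⟫ := by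
    rw [inner_sub_right, inner_neg_left, inner_neg_left, real_inner_self_eq_norm_sq]
    ring
  have hdsq : d ^ 2 = 1 - 2 * ⟪p', v⟫ + ‖p'‖ ^ 2 := by
    rw [hdd, @norm_sub_sq_real, hv, real_inner_comm]
    ring
  have hineq : ⟪v - p', v⟫ ≤ d := by
    calc ⟪v - p', v⟫ ≤ ‖v - p'‖ * ‖v‖ := real_inner_le_norm _ _
    _ = d := by rw [hv, hdd]; ring
  have hvv : ⟪v - p', v⟫ = 1 - ⟪p', v⟫ := by
    rw [inner_sub_left, real_inner_self_eq_norm_sq, hv, real_inner_comm]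
    ring
  have hnumge : ⟪-p', v - p'⟫ ≥ d ^ 2 - d := by
    rw [hnum]; rw [hvv] at hineq; linarith [hdsq]
  have hnumpos : (0:ℝ) ≤ ⟪-p', v - p'⟫ := by nlinarith
  have htpos : 0 ≤ t := by
    show 0 ≤ ⟪-p', v - p'⟫ / ‖v - p'‖ ^ 2
    positivity
  have hnormpp : ‖p' - p''‖ = t * d := by
    have : p' - p'' = -(t • (v - p')) := by
      show p' - (p' + t • (v - p')) = _; abel
    rw [this, norm_neg, norm_smul, Real.norm_eq_abs, abs_of_nonneg htpos, hdd]
  constructor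
  · rw [hnormpp]
    have ht : t = ⟪-p', v - p'⟫ / d ^ 2 := rfl
    have : t * d = ⟪-p', v - p'⟫ / d := by
      rw [ht]; field_simp
    rw [this]
    rw [ge_iff_le, le_div_iff₀ hdpos]
    nlinarith
  · nlinarith [mul_nonneg (sub_nonneg.mpr hs1) (sub_nonneg.mpr hsle)]
end

section
/- Let (δ_k)_{k≥0} be a sequence of nonnegative reals with δ_0 ≤ √ε for some ε ∈ (0,1), and suppose δ²_{k+1} ≤ δ²_k - (√2 - 1)²ε² whenever δ_k > ε. Then there exists k ≤ ⌈(ε - ε²)/((√2-1)²ε²)⌉ + 1 = O(1/ε) with δ_k ≤ ε. -/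
theorem eps_property_complexity (δ : ℕ → ℝ) (hnonneg : ∀ k, 0 ≤ δ k)
    (ε : ℝ) (hε : ε ∈ Set.Ioo (0 : ℝ) 1) (h0 : δ 0 ≤ Real.sqrt ε)
    (hdec : ∀ k, ε < δ k → δ (k + 1) ^ 2 ≤ δ k ^ 2 - (Real.sqrt 2 - 1) ^ 2 * ε ^ 2) :
    ∃ k : ℕ, k ≤ ⌈(ε - ε ^ 2) / ((Real.sqrt 2 - 1) ^ 2 * ε ^ 2)⌉₊ + 1 ∧ δ k ≤ ε := by
  obtain ⟨hε0, hε1⟩ := hε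
  set c : ℝ := (Real.sqrt 2 - 1) ^ 2 * ε ^ 2 with hc_def
  have hs2 : (1 : ℝ) < Real.sqrt 2 := by
    have := Real.lt_sqrt (x := 1) (y := 2) (by norm_num)
    nlinarith [this.mpr (by norm_num : (1:ℝ)^2 < 2)]
  have hc : 0 < c := by
    apply mul_pos (pow_pos (by linarith) 2) (pow_pos hε0 2)
  set N := ⌈(ε - ε ^ 2) / c⌉₊ with hN
  by_contra h
  push_neg at h
  have hbig : ∀ k, k ≤ N + 1 → ε < δ k := fun k hk => h k hk
  have key : ∀ k, k ≤ N + 1 → δ k ^ 2 ≤ δ 0 ^ 2 - k * c := by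
    intro k
    induction k with
    | zero => intro _; simp
    | succ n ih =>
      intro hn
      have hn' : n ≤ N + 1 := by omega
      have := hdec n (hbig n hn')
      have := ih hn'
      push_cast
      linarith
  have hδ0 : δ 0 ^ 2 ≤ ε := by
    have := Real.sq_sqrt hε0.le
    nlinarith [hnonneg 0, Real.sqrt_nonneg ε]
  have hNc : ε - ε ^ 2 ≤ N * c := by
    have := Nat.le_ceil ((ε - ε ^ 2) / c)
    rw [div_le_iff₀ hc] at this
    exact this
  have hlast := key (N + 1) le_rfl
  have hεlt := hbig (N + 1) le_rfl
  have : ε ^ 2 < δ (N + 1) ^ 2 := by nlinarith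
  push_cast at hlast
  nlinarith
end

section
/- Let A be an n×m real matrix and b ∈ ℝⁿ. Then the system Ax < b (strict componentwise inequality) has a solution x ∈ ℝ^m if and only if there is no (y, s) ∈ ℝⁿ × ℝ with Aᵀy = 0, bᵀy + s = 0, Σᵢ yᵢ + s = 1, y ≥ 0, s ≥ 0. -/
open Matrix

/-- Fiberwise summation: collapsing duplicate points with weights divided by fiber cardinality. -/
lemma gordan_fiber_sum {ι E M : Type*} [Fintype ι] [DecidableEq E]
    [AddCommMonoid M] [Module ℝ M] (v : ι → E) (w : E → ℝ) (G : E → M) :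
    ∑ k : ι, (w (v k) / (Finset.univ.filter (fun j => v j = v k)).card) • G (v k) =
      ∑ p ∈ Finset.univ.image v, w p • G p := by
  rw [← Finset.sum_fiberwise_of_maps_to (g := v)
      (fun k _ => Finset.mem_image_of_mem v (Finset.mem_univ k))]
  refine Finset.sum_congr rfl fun p hp => ?_
  have hcongr : ∀ k ∈ Finset.univ.filter (fun j => v j = p),
      (w (v k) / (Finset.univ.filter (fun j => v j = v k)).card) • G (v k)
        = (w p / (Finset.univ.filter (fun j => v j = p)).card) • G p := by
    intro k hk
    have hk' : v k = p := (Finset.mem_filter.mp hk).2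
    rw [hk']
  rw [Finset.sum_congr rfl hcongr, Finset.sum_const]
  rcases Finset.mem_image.mp hp with ⟨k0, _, rfl⟩
  have hmem : k0 ∈ Finset.univ.filter (fun j => v j = v k0) := by simp
  have hcard : ((Finset.univ.filter (fun j => v j = v k0)).card : ℝ) ≠ 0 := by
    exact_mod_cast Finset.card_ne_zero_of_mem hmem
  rw [← Nat.cast_smul_eq_nsmul ℝ, smul_smul, mul_div_cancel₀ _ hcard]

theorem gordan_strict_feasibility (n m : ℕ) (A : Matrix (Fin n) (Fin m) ℝ) (b : Fin n → ℝ) :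
    (∃ x : Fin m → ℝ, ∀ i, A.mulVec x i < b i) ↔
      ¬ ∃ (y : Fin n → ℝ) (s : ℝ),
        A.transpose.mulVec y = 0 ∧ b ⬝ᵥ y + s = 0 ∧ (∑ i, y i) + s = 1 ∧
          (∀ i, 0 ≤ y i) ∧ 0 ≤ s := by
  classical
  constructor
  · rintro ⟨x, hx⟩ ⟨y, s, hAy, hbs, hsum, hy, hs⟩
    -- y ⬝ (A x) = (Aᵀ y) ⬝ x = 0
    have hyAx : ∑ i, y i * A.mulVec x i = 0 := by
      have : y ⬝ᵥ A.mulVec x = A.transpose.mulVec y ⬝ᵥ x := by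
        rw [Matrix.dotProduct_mulVec, Matrix.mulVec_transpose]
      simpa [dotProduct, hAy] using this
    have hby : ∑ i, y i * b i = -s := by
      have h := hbs
      simp only [dotProduct] at h
      have hcomm : ∑ i, y i * b i = ∑ i, b i * y i := by
        exact Finset.sum_congr rfl fun i _ => mul_comm _ _
      linarith [hcomm, h]
    -- some coordinate of y is positive
    have hyne : ∃ i, 0 < y i := by
      by_contra h
      push_neg at h
      have hy0 : ∀ i, y i = 0 := fun i => le_antisymm (h i) (hy i)
      have : s = 1 := by simpa [hy0] using hsum
      have : s = 0 := by simpa [hy0, dotProduct] using hbs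
      simp_all
    obtain ⟨i0, hi0⟩ := hyne
    have hpos : 0 < ∑ i, y i * (b i - A.mulVec x i) := by
      refine Finset.sum_pos' (fun i _ => mul_nonneg (hy i) (by linarith [hx i])) ⟨i0, Finset.mem_univ i0, ?_⟩
      exact mul_pos hi0 (by linarith [hx i0])
    have : ∑ i, y i * (b i - A.mulVec x i) = -s := by
      simp only [mul_sub, Finset.sum_sub_distrib]
      rw [hyAx, hby, sub_zero]
    linarith [hs]
  · intro hno
    -- the points: rows (aᵢ, bᵢ) and (0, 1) in (Fin m → ℝ) × ℝ
    set v : Option (Fin n) → (Fin m → ℝ) × ℝ :=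
      fun k => Option.elim k ((0 : Fin m → ℝ), (1 : ℝ)) (fun i => (fun j => A i j, b i)) with hv
    -- 0 is not in the convex hull, else we'd get the alternative system
    have h0 : (0 : (Fin m → ℝ) × ℝ) ∉ convexHull ℝ (Set.range v) := by
      intro h0
      have hrange : Set.range v = ↑(Finset.univ.image v) := by
        simp [Finset.coe_image]
      rw [hrange, Finset.convexHull_eq] at h0
      obtain ⟨w, hw0, hw1, hwc⟩ := h0
      rw [Finset.centerMass_eq_of_sum_1 _ _ hw1] at hwc
      set c : Option (Fin n) → ℝ :=
        fun k => w (v k) / (Finset.univ.filter (fun j => v j = v k)).card with hc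
      have hcsum : ∑ k, c k = 1 := by
        have := gordan_fiber_sum v w (fun _ => (1 : ℝ))
        simpa [hc, smul_eq_mul] using this.trans (by simpa [smul_eq_mul] using hw1)
      have hcvec : ∑ k, c k • v k = 0 := by
        have := gordan_fiber_sum v w (id : (Fin m → ℝ) × ℝ → (Fin m → ℝ) × ℝ)
        simpa [hc] using this.trans (by simpa using hwc)
      have hcnn : ∀ k, 0 ≤ c k := by
        intro k
        exact div_nonneg (hw0 _ (Finset.mem_image_of_mem v (Finset.mem_univ k)))
          (Nat.cast_nonneg _)
      refine hno ⟨fun i => c (some i), c none, ?_, ?_, ?_, fun i => hcnn _, hcnn _⟩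
      · funext j
        have h1' : (∑ k, c k • v k).1 = 0 := by rw [hcvec]; rfl
        rw [Prod.fst_sum] at h1'
        have h1 : (∑ k, (c k • v k).1) j = (0 : Fin m → ℝ) j := by rw [h1']
        simp only [Finset.sum_apply, Fintype.sum_option, Prod.smul_fst, Pi.smul_apply,
          smul_eq_mul, hv, Option.elim, Pi.zero_apply, mul_zero, zero_add,
          Prod.fst_zero] at h1
        simp only [Matrix.mulVec, dotProduct, Matrix.transpose_apply, Pi.zero_apply]
        rw [← h1]
        exact Finset.sum_congr rfl fun i _ => mul_comm _ _
      · have h2 : (∑ k, (c k • v k).2) = 0 := by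
          rw [← Prod.snd_sum, hcvec, Prod.snd_zero]
        simp only [Fintype.sum_option, Prod.smul_snd, smul_eq_mul, hv, Option.elim,
          mul_one, Prod.snd_zero] at h2
        simp only [dotProduct]
        have hcomm : ∑ i, b i * c (some i) = ∑ i, c (some i) * b i := by
          exact Finset.sum_congr rfl fun i _ => mul_comm _ _
        linarith [h2, hcomm]
      · rw [Fintype.sum_option] at hcsum
        linarith [hcsum]
    -- separate 0 from the hull
    have hcvx : Convex ℝ (convexHull ℝ (Set.range v)) := convex_convexHull _ _
    have hcl : IsClosed (convexHull ℝ (Set.range v)) :=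
      ((Set.finite_range v).isCompact_convexHull ℝ).isClosed
    obtain ⟨f, u, hfu, hsep⟩ := geometric_hahn_banach_point_closed hcvx hcl h0
    have hu : 0 < u := by simpa using hfu
    have hfv : ∀ k, u < f (v k) :=
      fun k => hsep _ (subset_convexHull ℝ _ (Set.mem_range_self k))
    -- t₀ = f (0, 1) > 0
    set t₀ : ℝ := f ((0 : Fin m → ℝ), (1 : ℝ)) with ht₀
    have ht₀pos : 0 < t₀ := lt_trans hu (hfv none)
    -- linearity decomposition
    have hdecomp : ∀ (z : Fin m → ℝ) (t : ℝ), f (z, t) = f (z, 0) + t * t₀ := by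
      intro z t
      have : (z, t) = (z, (0 : ℝ)) + t • ((0 : Fin m → ℝ), (1 : ℝ)) := by
        simp [Prod.ext_iff]
      rw [this, f.map_add, f.map_smul, smul_eq_mul, ht₀]
    have hfa : ∀ (z : Fin m → ℝ), f (z, 0) = ∑ j, z j * f (Pi.single j 1, 0) := by
      intro z
      have hz : (z, (0 : ℝ)) = ∑ j, z j • ((Pi.single j 1 : Fin m → ℝ), (0 : ℝ)) := by
        rw [Prod.ext_iff]
        constructor
        · rw [Prod.fst_sum]
          simp only [Prod.smul_fst, smul_eq_mul]
          exact (pi_eq_sum_univ z).trans (by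
            refine Finset.sum_congr rfl fun j _ => ?_
            ext j'
            simp only [Pi.smul_apply, smul_eq_mul, Pi.single_apply]
            rcases eq_or_ne j j' with rfl | h
            · simp
            · simp [h, Ne.symm h])
        · rw [Prod.snd_sum]; simp
      rw [hz, map_sum]
      refine Finset.sum_congr rfl fun j _ => ?_
      rw [f.map_smul, smul_eq_mul]
    -- define the feasible point
    refine ⟨fun j => -f (Pi.single j 1, 0) / t₀, fun i => ?_⟩
    have hi : u < f (fun j => A i j, b i) := hfv (some i)
    rw [hdecomp, hfa] at hi
    have hAx : A.mulVec (fun j => -f (Pi.single j 1, 0) / t₀) i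
        = -(∑ j, A i j * f (Pi.single j 1, 0)) / t₀ := by
      simp only [Matrix.mulVec, dotProduct]
      have hterm : ∀ x, A i x * (-f (Pi.single x 1, 0) / t₀)
          = -(A i x * f (Pi.single x 1, 0)) / t₀ := fun x => by ring
      rw [Finset.sum_congr rfl (fun x _ => hterm x), ← Finset.sum_div,
        ← Finset.sum_neg_distrib]
    rw [hAx]
    rw [div_lt_iff₀ ht₀pos]
    nlinarith [hi, hu]
end

section
/- Let A be an m×n real matrix, b ∈ ℝ^m, and M > 0. The system Ax = b, x ≥ 0, eᵀx ≤ M (where e is the all-ones vector in ℝⁿ) has a solution if and only if there exist α ∈ ℝⁿ, β, γ ∈ ℝ with Aα - γb = 0, eᵀα + β - γM = 0, eᵀα + β + γ = 1, α ≥ 0, β ≥ 0, γ ≥ 0, and moreover in any such solution γ > 0 and x = α/γ solves the original system. -/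
theorem lp_feasibility_as_chm (m n : ℕ) (A : Matrix (Fin m) (Fin n) ℝ)
    (b : Fin m → ℝ) (M : ℝ) (hM : 0 < M) :
    ((∃ x : Fin n → ℝ, A.mulVec x = b ∧ (∀ j, 0 ≤ x j) ∧ ∑ j, x j ≤ M) ↔
      ∃ (α : Fin n → ℝ) (β γ : ℝ),
        A.mulVec α - γ • b = 0 ∧ (∑ j, α j) + β - γ * M = 0 ∧
          (∑ j, α j) + β + γ = 1 ∧ (∀ j, 0 ≤ α j) ∧ 0 ≤ β ∧ 0 ≤ γ) ∧
      ∀ (α : Fin n → ℝ) (β γ : ℝ),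
        A.mulVec α - γ • b = 0 → (∑ j, α j) + β - γ * M = 0 →
          (∑ j, α j) + β + γ = 1 → (∀ j, 0 ≤ α j) → 0 ≤ β → 0 ≤ γ →
            0 < γ ∧ A.mulVec (γ⁻¹ • α) = b ∧ (∀ j, 0 ≤ (γ⁻¹ • α) j) ∧
              ∑ j, (γ⁻¹ • α) j ≤ M := by
  have key : ∀ (α : Fin n → ℝ) (β γ : ℝ),
      A.mulVec α - γ • b = 0 → (∑ j, α j) + β - γ * M = 0 →
        (∑ j, α j) + β + γ = 1 → (∀ j, 0 ≤ α j) → 0 ≤ β → 0 ≤ γ →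
          0 < γ ∧ A.mulVec (γ⁻¹ • α) = b ∧ (∀ j, 0 ≤ (γ⁻¹ • α) j) ∧
            ∑ j, (γ⁻¹ • α) j ≤ M := by
    intro α β γ h1 h2 h3 hα hβ hγ
    have hγval : γ * (M + 1) = 1 := by nlinarith
    have hγpos : 0 < γ := by nlinarith
    refine ⟨hγpos, ?_, ?_, ?_⟩
    · have := sub_eq_zero.mp h1
      rw [Matrix.mulVec_smul, this]
      rw [smul_smul, inv_mul_cancel₀ hγpos.ne', one_smul]
    · intro j
      exact mul_nonneg (inv_nonneg.mpr hγpos.le) (hα j)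
    · have hsum : ∑ j, (γ⁻¹ • α) j = γ⁻¹ * ∑ j, α j := by
        simp [Finset.mul_sum, Pi.smul_apply, smul_eq_mul]
      rw [hsum]
      rw [inv_mul_le_iff₀ hγpos]
      nlinarith
  constructor
  · constructor
    · rintro ⟨x, hx, hx0, hxM⟩
      refine ⟨(M + 1)⁻¹ • x, (M + 1)⁻¹ * (M - ∑ j, x j), (M + 1)⁻¹, ?_, ?_, ?_, ?_, ?_, ?_⟩
      · rw [Matrix.mulVec_smul, hx]; simp
      · have : ∑ j, ((M + 1)⁻¹ • x) j = (M + 1)⁻¹ * ∑ j, x j := by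
          simp [Finset.mul_sum]
        rw [this]; ring
      · have : ∑ j, ((M + 1)⁻¹ • x) j = (M + 1)⁻¹ * ∑ j, x j := by
          simp [Finset.mul_sum]
        rw [this]
        field_simp
        ring
      · intro j
        exact mul_nonneg (inv_nonneg.mpr (by linarith)) (hx0 j)
      · apply mul_nonneg (inv_nonneg.mpr (by linarith)); linarith
      · exact inv_nonneg.mpr (by linarith)
    · rintro ⟨α, β, γ, h1, h2, h3, hα, hβ, hγ⟩
      obtain ⟨_, h, h0, hM'⟩ := key α β γ h1 h2 h3 hα hβ hγ
      exact ⟨γ⁻¹ • α, h, h0, hM'⟩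
  · exact key
end
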